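/- arXiv:1807.00915 — 5 statements merged into one kernel-verified Lean document; each statement's English description precedes it below -/
import Mathlib

section
/- Let n ≥ 1 and let x_0, x_1, …, x_n be real numbers whose increments Δx_k := x_k − x_{k−1} are all nonzero (1 ≤ k ≤ n). Then the Extrema Quadratic Variation of the sequence equals its quadratic variation plus twice the sum of cross products of increments separated only by increments of a common sign; precisely, D₂^Ext(x) = Σ_{k=1}^n (Δx_k)² + 2 Σ_{1 ≤ i < j ≤ n} Δx_i · Δx_j · Π_{k=i}^{j−1} 1{Δx_k · Δx_{k+1} > 0}, where 1{·} denotes the indicator of the stated condition. -/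
open Finset

/-- The set of extremal indices of the sequence `x 0, x 1, …, x n`: the endpoints `0` and `n`
together with every interior index `i` (with `1 ≤ i ≤ n - 1`) at which the consecutive
increments change sign. -/
noncomputable def extremalIndices (n : ℕ) (x : ℕ → ℝ) : Finset ℕ :=
  (Finset.range (n + 1)).filter
    (fun i => i = 0 ∨ i = n ∨
      (1 ≤ i ∧ i ≤ n - 1 ∧ (x i - x (i - 1)) * (x (i + 1) - x i) < 0))

/-- The Extrema Quadratic Variation of the sequence `x 0, …, x n`: listing the extremal
indices in increasing order as `τ_0 < τ_1 < … < τ_m`, it is `∑_{i=1}^m (x τ_i - x τ_{i-1})²`. -/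
noncomputable def extQV (n : ℕ) (x : ℕ → ℝ) : ℝ :=
  let L := (extremalIndices n x).sort (· ≤ ·)
  ((L.zip L.tail).map (fun p => (x p.2 - x p.1) ^ 2)).sum

/-! Induction on `n`. Let `τ` be the last extremal index before `n + 1`, where the monotone run
through the step `n → n + 1` starts. Going from `n` to `n + 1` the sorted extremal indices end in
`τ, n` (with `τ = n` when `n` stays extremal) resp. `τ, n + 1`, so `D₂^Ext` grows by
`(x_{n+1} - x_τ)² - (x_n - x_τ)² = (Δx_{n+1})² + 2 Δx_{n+1} (x_n - x_τ)`. On the other side, when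
all increments are nonzero the product of same-sign indicators over `[i, n]` is `1` exactly for
`i > τ`, so the new cross terms telescope to the same `2 Δx_{n+1} (x_n - x_τ)`. -/

theorem Finset.sort_insert_of_forall_lt {α : Type*} [LinearOrder α] {s : Finset α} {b : α}
    (hb : ∀ a ∈ s, a < b) : (insert b s).sort (· ≤ ·) = s.sort (· ≤ ·) ++ [b] := by
  have hbs : b ∉ s := fun h => (hb b h).false
  refine List.Perm.eq_of_pairwise' (pairwise_sort _ _) ?_ ?_
  · simpa [List.pairwise_append] using fun a ha => (hb a ha).le
  · rw [List.perm_ext_iff_of_nodup (sort_nodup _ _)]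
    · intro a; simp [or_comm]
    · simp [List.nodup_append, sort_nodup, hbs]

noncomputable def sqGapSum {α : Type*} (x : α → ℝ) (L : List α) : ℝ :=
  ((L.zip L.tail).map (fun p => (x p.2 - x p.1) ^ 2)).sum

lemma sqGapSum_append_pair {α : Type*} (x : α → ℝ) (L : List α) (a b : α) :
    sqGapSum x (L ++ [a, b]) = sqGapSum x (L ++ [a]) + (x b - x a) ^ 2 := by
  induction L with
  | nil => simp [sqGapSum]
  | cons c L ih =>
    cases L with
    | nil => simp [sqGapSum]
    | cons d L => simp_all [sqGapSum]; ring

lemma sqGapSum_sort_insert {α : Type*} [LinearOrder α] (x : α → ℝ) {s : Finset α} {a b : α}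
    (ha : IsGreatest (s : Set α) a) (hab : a ≤ b) :
    sqGapSum x ((insert b s).sort (· ≤ ·)) = sqGapSum x (s.sort (· ≤ ·)) + (x b - x a) ^ 2 := by
  obtain rfl | hab := hab.eq_or_lt
  · simp [insert_eq_of_mem ha.1]
  have hlt : ∀ c ∈ s.erase a, c < a := fun c hc =>
    (ha.2 (mem_of_mem_erase hc)).lt_of_ne (ne_of_mem_erase hc)
  rw [sort_insert_of_forall_lt fun c hc => (ha.2 hc).trans_lt hab, ← insert_erase ha.1,
    sort_insert_of_forall_lt hlt, List.append_assoc, List.singleton_append,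
    sqGapSum_append_pair]

lemma extQV_eq_sqGapSum (n : ℕ) (x : ℕ → ℝ) :
    extQV n x = sqGapSum x ((extremalIndices n x).sort (· ≤ ·)) := rfl

noncomputable def turningPoints (n : ℕ) (x : ℕ → ℝ) : Finset ℕ :=
  (Icc 1 n).filter fun k => (x k - x (k - 1)) * (x (k + 1) - x k) < 0

lemma extremalIndices_eq_insert (n : ℕ) (x : ℕ → ℝ) :
    extremalIndices n x = insert n (insert 0 (turningPoints n x)) := by
  ext i
  simp only [extremalIndices, turningPoints, mem_filter, mem_insert, mem_range, mem_Icc]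
  grind

lemma extremalIndices_succ (n : ℕ) (x : ℕ → ℝ) :
    extremalIndices (n + 1) x = insert (n + 1) (insert 0 (turningPoints n x)) := by
  ext i
  simp only [extremalIndices, turningPoints, mem_filter, mem_insert, mem_range, mem_Icc]
  grind

noncomputable def runStart (n : ℕ) (x : ℕ → ℝ) : ℕ :=
  (insert 0 (turningPoints n x)).max' (insert_nonempty 0 _)

lemma isGreatest_runStart (n : ℕ) (x : ℕ → ℝ) :
    IsGreatest (↑(insert 0 (turningPoints n x)) : Set ℕ) (runStart n x) :=
  isGreatest_max' _ _

lemma runStart_le (n : ℕ) (x : ℕ → ℝ) : runStart n x ≤ n := by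
  obtain h | h := mem_insert.1 (isGreatest_runStart n x).1
  · omega
  · exact (mem_Icc.1 (mem_filter.1 h).1).2

lemma extQV_succ (n : ℕ) (x : ℕ → ℝ) :
    extQV (n + 1) x = extQV n x + (x (n + 1) - x n) ^ 2 +
      2 * (x (n + 1) - x n) * (x n - x (runStart n x)) := by
  have hτ := isGreatest_runStart n x
  rw [extQV_eq_sqGapSum, extQV_eq_sqGapSum, extremalIndices_succ, extremalIndices_eq_insert,
    sqGapSum_sort_insert x hτ (by linarith [runStart_le n x]),
    sqGapSum_sort_insert x hτ (runStart_le n x)]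
  ring

lemma prod_sameSign_indicator_eq_ite {n : ℕ} {x : ℕ → ℝ}
    (hx : ∀ k, 1 ≤ k → k ≤ n + 1 → x k - x (k - 1) ≠ 0) {i : ℕ} (hi : 1 ≤ i) :
    ∏ k ∈ Ico i (n + 1), (if 0 < (x k - x (k - 1)) * (x (k + 1) - x k) then (1 : ℝ) else 0) =
      if runStart n x < i then 1 else 0 := by
  have hτ := isGreatest_runStart n x
  rw [prod_boole]
  refine if_congr ⟨fun hpos => ?_, fun hlt k hk => ?_⟩ rfl rfl
  · by_contra! hle
    obtain h0 | hturn := mem_insert.1 hτ.1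
    · omega
    have hτ' := mem_filter.1 hturn
    have := hpos _ (mem_Ico.2 ⟨hle, by linarith [(mem_Icc.1 hτ'.1).2]⟩)
    linarith [hτ'.2]
  · have hk := mem_Ico.1 hk
    have hnot : k ∉ turningPoints n x := fun h => by
      have := hτ.2 (mem_insert_of_mem h)
      omega
    have hne : (x k - x (k - 1)) * (x (k + 1) - x k) ≠ 0 :=
      mul_ne_zero (hx k (by omega) (by omega)) (by simpa using hx (k + 1) (by omega) (by omega))
    refine hne.symm.lt_of_le (not_lt.1 fun hneg => hnot ?_)
    exact mem_filter.2 ⟨mem_Icc.2 ⟨by omega, by omega⟩, hneg⟩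

lemma sum_incr_mul_prod_sameSign_indicator {n : ℕ} {x : ℕ → ℝ}
    (hx : ∀ k, 1 ≤ k → k ≤ n + 1 → x k - x (k - 1) ≠ 0) :
    ∑ i ∈ Ico 1 (n + 1), (x i - x (i - 1)) *
      ∏ k ∈ Ico i (n + 1), (if 0 < (x k - x (k - 1)) * (x (k + 1) - x k) then (1 : ℝ) else 0) =
      x n - x (runStart n x) := by
  have hτ := runStart_le n x
  have hrun : (Ico 1 (n + 1)).filter (runStart n x < ·) = Ico (runStart n x + 1) (n + 1) := by
    ext i; simp only [mem_filter, mem_Ico]; omega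
  rw [sum_congr rfl fun i hi => by
      rw [prod_sameSign_indicator_eq_ite hx (mem_Ico.1 hi).1, mul_ite, mul_one, mul_zero],
    ← sum_filter, hrun, ← sum_Ico_add' (fun i => x i - x (i - 1))]
  simpa using sum_Ico_sub x hτ

theorem extQV_eq_qv_add_cross_general (n : ℕ) (x : ℕ → ℝ)
    (hx : ∀ k, 1 ≤ k → k ≤ n → x k - x (k - 1) ≠ 0) :
    extQV n x =
      (∑ k ∈ Finset.Icc 1 n, (x k - x (k - 1)) ^ 2) +
        2 * ∑ j ∈ Finset.Icc 1 n, ∑ i ∈ Finset.Ico 1 j,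
          (x i - x (i - 1)) * (x j - x (j - 1)) *
            ∏ k ∈ Finset.Ico i j,
              (if 0 < (x k - x (k - 1)) * (x (k + 1) - x k) then (1 : ℝ) else 0) := by
  induction n with
  | zero => simp [extQV_eq_sqGapSum, extremalIndices_eq_insert, turningPoints, sqGapSum]
  | succ n ih =>
    have hcross := sum_incr_mul_prod_sameSign_indicator hx
    rw [extQV_succ, ih fun k hk hkn => hx k hk (by omega), sum_Icc_succ_top (by omega),
      sum_Icc_succ_top (by omega), Nat.add_sub_cancel]
    simp only [mul_right_comm _ (x (n + 1) - x n), ← sum_mul, hcross]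
    ring

theorem extQV_eq_qv_add_cross (n : ℕ) (hn : 1 ≤ n) (x : ℕ → ℝ)
    (hx : ∀ k, 1 ≤ k → k ≤ n → x k - x (k - 1) ≠ 0) :
    extQV n x =
      (∑ k ∈ Finset.Icc 1 n, (x k - x (k - 1)) ^ 2) +
        2 * ∑ j ∈ Finset.Icc 1 n, ∑ i ∈ Finset.Ico 1 j,
          (x i - x (i - 1)) * (x j - x (j - 1)) *
            ∏ k ∈ Finset.Ico i j,
              (if 0 < (x k - x (k - 1)) * (x (k + 1) - x k) then (1 : ℝ) else 0) :=
  extQV_eq_qv_add_cross_general n x hx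
end

section
/- Let n ≥ 2 and let Z_1, …, Z_n be real random variables on a probability space such that: (i) (stationarity) for every 1 ≤ j and every length l ≥ 1 with j + l − 1 ≤ n, the joint law of (Z_j, Z_{j+1}, …, Z_{j+l−1}) equals the joint law of (Z_1, Z_2, …, Z_l); (ii) (symmetry) the law of (Z_1, …, Z_n) equals the law of (−Z_1, …, −Z_n); (iii) all the products appearing below are integrable. Then Σ_{i=2}^n Σ_{j=1}^{i−1} E[ Z_i Z_j Π_{k=j}^{i−1} 1{Z_k Z_{k+1} > 0} ] = 2 Σ_{k=2}^n (n+1−k) · E[ Z_1 Z_k Π_{j=1}^{k} 1{Z_j > 0} ]. -/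
open MeasureTheory ProbabilityTheory Finset

/-!
If the consecutive products `Z_k Z_{k+1}`, `j ≤ k < i`, are all positive, then `Z_j, …, Z_i`
share one strict sign, so the indicator of the run is the sum of the all-positive and the
all-negative indicators. By stationarity the `(i, j)` term only depends on the gap `i - j`; by the
symmetry `Z ↦ -Z` the all-negative part has the same expectation as the all-positive one, giving
the factor `2`; and a gap `k - 1` occurs for exactly `n + 1 - k` pairs `1 ≤ j < i ≤ n`.
-/

section SignPattern

variable {R : Type*} [CommRing R] [LinearOrder R] [IsStrictOrderedRing R]

theorem ite_pos_mul_ite_pos_mul (x y : R) :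
    (if 0 < x then (1 : R) else 0) * (if 0 < x * y then 1 else 0) =
      (if 0 < x then 1 else 0) * (if 0 < y then 1 else 0) := by
  by_cases hx : 0 < x <;> simp [hx, mul_pos_iff_of_pos_left]

theorem prod_ite_pos_mul_succ (a : ℕ → R) {d : ℕ} (hd : d ≠ 0) :
    ∏ k ∈ range d, (if 0 < a k * a (k + 1) then (1 : R) else 0) =
      ∏ k ∈ range (d + 1), (if 0 < a k then (1 : R) else 0) +
        ∏ k ∈ range (d + 1), (if 0 < -a k then (1 : R) else 0) := by
  obtain ⟨d, rfl⟩ := Nat.exists_eq_succ_of_ne_zero hd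
  induction d with
  | zero =>
    rcases lt_trichotomy (a 0) 0 with h | h | h <;>
      simp [prod_range_succ, h, h.not_gt, mul_pos_iff]
  | succ d ih =>
    have hneg := ite_pos_mul_ite_pos_mul (-a (d + 1)) (-a (d + 1 + 1))
    rw [neg_mul_neg] at hneg
    rw [prod_range_succ, ih (by simp), add_mul, prod_range_succ _ (d + 1 + 1),
      prod_range_succ _ (d + 1 + 1), prod_range_succ _ (d + 1), prod_range_succ _ (d + 1),
      mul_assoc, mul_assoc, ite_pos_mul_ite_pos_mul, hneg]
    ring

end SignPattern

theorem sum_Icc_sum_Ico_sub_add_one {M : Type*} [AddCommMonoid M] (f : ℕ → M) (n : ℕ) :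
    ∑ i ∈ Icc 2 n, ∑ j ∈ Ico 1 i, f (i - j + 1) = ∑ k ∈ Icc 2 n, (n + 1 - k) • f k := by
  have inner (i : ℕ) : ∑ j ∈ Ico 1 i, f (i - j + 1) = ∑ k ∈ Icc 2 i, f k :=
    sum_nbij' (fun j => i - j + 1) (fun k => i + 1 - k)
      (by simp only [mem_Ico, mem_Icc]; omega) (by simp only [mem_Ico, mem_Icc]; omega)
      (by simp only [mem_Ico]; omega) (by simp only [mem_Icc]; omega) (fun _ _ => rfl)
  simp_rw [inner]
  rw [sum_comm' (t' := Icc 2 n) (s' := fun k => Icc k n) (by simp only [mem_Icc]; omega)]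
  simp

theorem identDistrib_comp_of_map_eq {Ω β γ : Type*} [MeasurableSpace Ω] [MeasurableSpace β]
    [Inhabited β] [MeasurableSpace γ] {P : Measure Ω} {A B : ℕ → Ω → β}
    (hA : ∀ m, Measurable (A m)) (hB : ∀ m, Measurable (B m)) {l : ℕ}
    (h : P.map (fun ω (i : Fin l) => A i ω) = P.map (fun ω (i : Fin l) => B i ω))
    {Φ : (ℕ → β) → γ} (hΦ : Measurable Φ) (hdep : DependsOn Φ (Set.Iio l)) :
    IdentDistrib (fun ω => Φ (fun m => A m ω)) (fun ω => Φ (fun m => B m ω)) P P := by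
  let extend : (Fin l → β) → ℕ → β := fun x m => if h : m < l then x ⟨m, h⟩ else default
  have hextend : Measurable extend := by
    refine measurable_pi_lambda _ fun m => ?_
    by_cases hm : m < l
    · simpa [extend, hm] using measurable_pi_apply _
    · simp [extend, hm]
  have hcomp (C : ℕ → Ω → β) (ω : Ω) :
      Φ (fun m => C m ω) = Φ (extend fun i : Fin l => C i ω) :=
    hdep fun m hm => by simp [extend, Set.mem_Iio.mp hm]
  simp only [hcomp]
  have hblock : IdentDistrib (fun ω (i : Fin l) => A i ω) (fun ω i => B i ω) P P :=
    ⟨(measurable_pi_lambda _ fun i : Fin l => hA i).aemeasurable,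
      (measurable_pi_lambda _ fun i : Fin l => hB i).aemeasurable, h⟩
  exact hblock.comp (hΦ.comp hextend)

noncomputable def sameSignTerm (d : ℕ) (a : ℕ → ℝ) : ℝ :=
  a d * a 0 * ∏ k ∈ range d, if 0 < a k * a (k + 1) then 1 else 0

noncomputable def positiveTerm (d : ℕ) (a : ℕ → ℝ) : ℝ :=
  a 0 * a d * ∏ k ∈ range (d + 1), if 0 < a k then 1 else 0

theorem sameSignTerm_eq_positiveTerm_add (d : ℕ) (a : ℕ → ℝ) :
    sameSignTerm d a = positiveTerm d a + positiveTerm d (fun m => -a m) := by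
  rcases eq_or_ne d 0 with rfl | hd
  · rcases lt_trichotomy (a 0) 0 with h | h | h <;>
      simp [sameSignTerm, positiveTerm, h, h.not_gt]
  · rw [sameSignTerm, positiveTerm, positiveTerm, prod_ite_pos_mul_succ a hd]
    ring

theorem sameSignTerm_shift (a : ℕ → ℝ) (j d : ℕ) :
    sameSignTerm d (fun m => a (j + m)) =
      a (j + d) * a j * ∏ k ∈ Ico j (j + d), if 0 < a k * a (k + 1) then 1 else 0 := by
  simp [sameSignTerm, prod_Ico_eq_prod_range, add_assoc]

theorem positiveTerm_shift_one (a : ℕ → ℝ) (d : ℕ) :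
    positiveTerm d (fun m => a (1 + m)) =
      a 1 * a (d + 1) * ∏ k ∈ Icc 1 (d + 1), if 0 < a k then 1 else 0 := by
  simp [positiveTerm, ← Ico_add_one_right_eq_Icc, prod_Ico_eq_prod_range, add_comm]

@[fun_prop]
theorem Measurable.ite_pos_one {α : Type*} [MeasurableSpace α] {f : α → ℝ} (hf : Measurable f) :
    Measurable fun x => if 0 < f x then (1 : ℝ) else 0 :=
  Measurable.ite (measurableSet_lt measurable_const hf) measurable_const measurable_const

theorem measurable_sameSignTerm (d : ℕ) : Measurable (sameSignTerm d) := by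
  unfold sameSignTerm
  fun_prop

theorem measurable_positiveTerm (d : ℕ) : Measurable (positiveTerm d) := by
  unfold positiveTerm
  fun_prop

theorem dependsOn_sameSignTerm (d : ℕ) : DependsOn (sameSignTerm d) (Set.Iio (d + 1)) := by
  intro a b h
  have hagree (k : ℕ) (hk : k ≤ d) : a k = b k := h k (Set.mem_Iio.mpr (by omega))
  unfold sameSignTerm
  rw [hagree d le_rfl, hagree 0 d.zero_le]
  refine congrArg _ (prod_congr rfl fun k hk => ?_)
  rw [mem_range] at hk
  rw [hagree k hk.le, hagree (k + 1) hk]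

theorem dependsOn_positiveTerm (d : ℕ) : DependsOn (positiveTerm d) (Set.Iio (d + 1)) := by
  intro a b h
  have hagree (k : ℕ) (hk : k ≤ d) : a k = b k := h k (Set.mem_Iio.mpr (by omega))
  unfold positiveTerm
  rw [hagree d le_rfl, hagree 0 d.zero_le]
  refine congrArg _ (prod_congr rfl fun k hk => ?_)
  rw [mem_range] at hk
  rw [hagree k (by omega)]

theorem integral_sameSign_eq_two_mul_integral_positive {Ω : Type*} [MeasurableSpace Ω]
    {P : Measure Ω} {n : ℕ} {Z : ℕ → Ω → ℝ} (hmeas : ∀ i, Measurable (Z i))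
    (hstat : ∀ j l : ℕ, 1 ≤ j → 1 ≤ l → j + l - 1 ≤ n →
      Measure.map (fun ω => fun i : Fin l => Z (j + (i : ℕ)) ω) P =
        Measure.map (fun ω => fun i : Fin l => Z (1 + (i : ℕ)) ω) P)
    (hsym : Measure.map (fun ω => fun i : Fin n => Z (1 + (i : ℕ)) ω) P =
      Measure.map (fun ω => fun i : Fin n => -Z (1 + (i : ℕ)) ω) P)
    {i j : ℕ} (hj : 1 ≤ j) (hji : j < i) (hin : i ≤ n)
    (hint : Integrable (fun ω => Z 1 ω * Z (i - j + 1) ω *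
      ∏ k ∈ Icc 1 (i - j + 1), (if 0 < Z k ω then (1 : ℝ) else 0)) P) :
    ∫ ω, Z i ω * Z j ω * ∏ k ∈ Ico j i, (if 0 < Z k ω * Z (k + 1) ω then (1 : ℝ) else 0) ∂P =
      2 * ∫ ω, Z 1 ω * Z (i - j + 1) ω *
        ∏ k ∈ Icc 1 (i - j + 1), (if 0 < Z k ω then (1 : ℝ) else 0) ∂P := by
  obtain ⟨d, rfl⟩ := Nat.exists_eq_add_of_le hji.le
  rw [Nat.add_sub_cancel_left] at hint ⊢
  have hchain (ω : Ω) := sameSignTerm_shift (Z · ω) j d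
  have hpos (ω : Ω) := positiveTerm_shift_one (Z · ω) d
  simp only [← hchain, ← hpos] at hint ⊢
  have hshift : IdentDistrib (fun ω => sameSignTerm d fun m => Z (j + m) ω)
      (fun ω => sameSignTerm d fun m => Z (1 + m) ω) P P :=
    identDistrib_comp_of_map_eq (fun _ => hmeas _) (fun _ => hmeas _)
      (hstat j (d + 1) hj d.succ_pos (by omega)) (measurable_sameSignTerm d)
      (dependsOn_sameSignTerm d)
  have hflip : IdentDistrib (fun ω => positiveTerm d fun m => Z (1 + m) ω)
      (fun ω => positiveTerm d fun m => -Z (1 + m) ω) P P :=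
    identDistrib_comp_of_map_eq (fun _ => hmeas _) (fun _ => (hmeas _).neg) hsym
      (measurable_positiveTerm d)
      ((dependsOn_positiveTerm d).mono (Set.Iio_subset_Iio (by omega)))
  rw [hshift.integral_eq]
  simp only [sameSignTerm_eq_positiveTerm_add]
  rw [integral_add hint (hflip.integrable_iff.mp hint), ← hflip.integral_eq, two_mul]

theorem stationary_symmetric_cross_sum_general {Ω : Type*} [MeasurableSpace Ω]
    (P : Measure Ω)
    (n : ℕ) (Z : ℕ → Ω → ℝ) (hmeas : ∀ i, Measurable (Z i))
    (hstat : ∀ j l : ℕ, 1 ≤ j → 1 ≤ l → j + l - 1 ≤ n →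
      Measure.map (fun ω => fun i : Fin l => Z (j + (i : ℕ)) ω) P =
        Measure.map (fun ω => fun i : Fin l => Z (1 + (i : ℕ)) ω) P)
    (hsym : Measure.map (fun ω => fun i : Fin n => Z (1 + (i : ℕ)) ω) P =
      Measure.map (fun ω => fun i : Fin n => -Z (1 + (i : ℕ)) ω) P)
    (hint₂ : ∀ k : ℕ, 2 ≤ k → k ≤ n →
      Integrable (fun ω => Z 1 ω * Z k ω *
        ∏ j ∈ Finset.Icc 1 k, (if 0 < Z j ω then (1 : ℝ) else 0)) P) :
    ∑ i ∈ Finset.Icc 2 n, ∑ j ∈ Finset.Ico 1 i,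
        ∫ ω, Z i ω * Z j ω *
          ∏ k ∈ Finset.Ico j i, (if 0 < Z k ω * Z (k + 1) ω then (1 : ℝ) else 0) ∂P =
      2 * ∑ k ∈ Finset.Icc 2 n, ((n + 1 - k : ℕ) : ℝ) *
        ∫ ω, Z 1 ω * Z k ω *
          ∏ j ∈ Finset.Icc 1 k, (if 0 < Z j ω then (1 : ℝ) else 0) ∂P := by
  simp only [← nsmul_eq_mul]
  rw [← sum_Icc_sum_Ico_sub_add_one, mul_sum]
  refine sum_congr rfl fun i hi => ?_
  rw [mul_sum]
  refine sum_congr rfl fun j hj => ?_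
  simp only [mem_Icc, mem_Ico] at hi hj
  exact integral_sameSign_eq_two_mul_integral_positive hmeas hstat hsym hj.1 hj.2 hi.2
    (hint₂ _ (by omega) (by omega))

theorem stationary_symmetric_cross_sum {Ω : Type*} [MeasurableSpace Ω]
    (P : Measure Ω) [IsProbabilityMeasure P]
    (n : ℕ) (hn : 2 ≤ n) (Z : ℕ → Ω → ℝ) (hmeas : ∀ i, Measurable (Z i))
    (hstat : ∀ j l : ℕ, 1 ≤ j → 1 ≤ l → j + l - 1 ≤ n →
      Measure.map (fun ω => fun i : Fin l => Z (j + (i : ℕ)) ω) P =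
        Measure.map (fun ω => fun i : Fin l => Z (1 + (i : ℕ)) ω) P)
    (hsym : Measure.map (fun ω => fun i : Fin n => Z (1 + (i : ℕ)) ω) P =
      Measure.map (fun ω => fun i : Fin n => -Z (1 + (i : ℕ)) ω) P)
    (hint₁ : ∀ i j : ℕ, 1 ≤ j → j < i → i ≤ n →
      Integrable (fun ω => Z i ω * Z j ω *
        ∏ k ∈ Finset.Ico j i, (if 0 < Z k ω * Z (k + 1) ω then (1 : ℝ) else 0)) P)
    (hint₂ : ∀ k : ℕ, 2 ≤ k → k ≤ n →
      Integrable (fun ω => Z 1 ω * Z k ω *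
        ∏ j ∈ Finset.Icc 1 k, (if 0 < Z j ω then (1 : ℝ) else 0)) P) :
    ∑ i ∈ Finset.Icc 2 n, ∑ j ∈ Finset.Ico 1 i,
        ∫ ω, Z i ω * Z j ω *
          ∏ k ∈ Finset.Ico j i, (if 0 < Z k ω * Z (k + 1) ω then (1 : ℝ) else 0) ∂P =
      2 * ∑ k ∈ Finset.Icc 2 n, ((n + 1 - k : ℕ) : ℝ) *
        ∫ ω, Z 1 ω * Z k ω *
          ∏ j ∈ Finset.Icc 1 k, (if 0 < Z j ω then (1 : ℝ) else 0) ∂P :=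
  stationary_symmetric_cross_sum_general P n Z hmeas hstat hsym hint₂
end

section
/- Fix ε > 0. Then lim_{n→∞} ε² · ( 1 − e^{−1/(n ε²)} )² · Σ_{k=2}^n (n+1−k) · e^{−(k−1)/(n ε²)} = 1 + ε² ( e^{−1/ε²} − 1 ). -/
/-!
Put `q = exp (-1 / (n ε²))`, so that the summand is `(n + 1 - k) q^(k-1)`. This
arithmetico-geometric sum has the closed form
`(1 - q)² S = (n - 1) q - n q² + q^(n+1) = q · n(1 - q) - q + q^(n+1)`, and as `n → ∞` we have
`q → 1`, `n(1 - q) → 1/ε²` (the derivative of `exp` at `0`) and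
`q^(n+1) = exp (-(n+1)/(n ε²)) → exp (-1/ε²)`.
-/

open Filter Topology Real

theorem one_sub_mul_sum_Icc_two_pow_sub_one {R : Type*} [CommRing R] (q : R) (n : ℕ) :
    (1 - q) * ∑ k ∈ Finset.Icc 2 (n + 1), q ^ (k - 1) = q - q ^ (n + 1) := by
  induction n with
  | zero => simp
  | succ n ih =>
    rw [Finset.sum_Icc_succ_top (by omega), Nat.add_sub_cancel]
    linear_combination ih

theorem one_sub_sq_mul_sum_Icc_two {R : Type*} [CommRing R] (q : R) (n : ℕ) :
    (1 - q) ^ 2 * ∑ k ∈ Finset.Icc 2 n, ((n + 1 - k : ℕ) : R) * q ^ (k - 1)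
      = ((n : R) - 1) * q - n * q ^ 2 + q ^ (n + 1) := by
  induction n with
  | zero => simp
  | succ n ih =>
    rcases Nat.eq_zero_or_pos n with rfl | hn
    · simp
    have htop : ∑ k ∈ Finset.Icc 2 (n + 1), ((n + 1 - k : ℕ) : R) * q ^ (k - 1)
        = ∑ k ∈ Finset.Icc 2 n, ((n + 1 - k : ℕ) : R) * q ^ (k - 1) := by
      rw [Finset.sum_Icc_succ_top (by omega)]
      simp
    have hsplit : ∑ k ∈ Finset.Icc 2 (n + 1), ((n + 1 + 1 - k : ℕ) : R) * q ^ (k - 1)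
        = ∑ k ∈ Finset.Icc 2 n, ((n + 1 - k : ℕ) : R) * q ^ (k - 1)
          + ∑ k ∈ Finset.Icc 2 (n + 1), q ^ (k - 1) := by
      rw [← htop, ← Finset.sum_add_distrib]
      refine Finset.sum_congr rfl fun k hk => ?_
      rw [Finset.mem_Icc] at hk
      rw [show n + 1 + 1 - k = (n + 1 - k) + 1 by omega, Nat.cast_succ]
      ring
    rw [hsplit]
    push_cast
    linear_combination ih + (1 - q) * one_sub_mul_sum_Icc_two_pow_sub_one q n

theorem exp_neg_natCast_sub_one_div (x : ℝ) {k : ℕ} (hk : 1 ≤ k) :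
    exp (-((k : ℝ) - 1) / x) = exp (-1 / x) ^ (k - 1) := by
  rw [← exp_nat_mul, Nat.cast_sub hk]
  ring_nf

theorem tendsto_exp_sub_one_div_self :
    Tendsto (fun t => (exp t - 1) / t) (𝓝[≠] 0) (𝓝 1) := by
  have h := hasDerivAt_iff_tendsto_slope_zero.mp (hasDerivAt_exp 0)
  simpa [div_eq_inv_mul] using h

theorem tendsto_neg_one_div_natCast_mul {a : ℝ} (ha : 0 < a) :
    Tendsto (fun n : ℕ => -1 / (n * a)) atTop (𝓝[≠] 0) := by
  have hinv : Tendsto (fun n : ℕ => (n * a)⁻¹) atTop (𝓝 0) :=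
    (tendsto_natCast_atTop_atTop.atTop_mul_const ha).inv_tendsto_atTop
  refine tendsto_nhdsWithin_iff.mpr ⟨by simpa [neg_div] using hinv.neg, ?_⟩
  filter_upwards [eventually_gt_atTop 0] with n hn
  simp only [Set.mem_compl_iff, Set.mem_singleton_iff]
  positivity

theorem tendsto_exp_neg_one_div_natCast_mul {a : ℝ} (ha : 0 < a) :
    Tendsto (fun n : ℕ => exp (-1 / (n * a))) atTop (𝓝 1) := by
  simpa [Function.comp_def] using (continuous_exp.tendsto 0).comp
    ((tendsto_neg_one_div_natCast_mul ha).mono_right nhdsWithin_le_nhds)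

theorem tendsto_natCast_mul_one_sub_exp_neg_one_div_natCast_mul {a : ℝ} (ha : 0 < a) :
    Tendsto (fun n : ℕ => n * (1 - exp (-1 / (n * a)))) atTop (𝓝 a⁻¹) := by
  have h :=
    (tendsto_exp_sub_one_div_self.comp (tendsto_neg_one_div_natCast_mul ha)).const_mul a⁻¹
  rw [mul_one] at h
  refine h.congr' ?_
  filter_upwards [eventually_gt_atTop 0] with n hn
  have : (n : ℝ) ≠ 0 := by positivity
  simp only [Function.comp_apply]
  field_simp
  ring

theorem tendsto_exp_neg_one_div_natCast_mul_pow_succ {a : ℝ} (ha : 0 < a) :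
    Tendsto (fun n : ℕ => exp (-1 / (n * a)) ^ (n + 1)) atTop (𝓝 (exp (-1 / a))) := by
  have h := (tendsto_const_nhds (x := -1 / a)).add
    ((tendsto_neg_one_div_natCast_mul ha).mono_right nhdsWithin_le_nhds)
  rw [add_zero] at h
  refine ((continuous_exp.tendsto _).comp h).congr' ?_
  filter_upwards [eventually_gt_atTop 0] with n hn
  have : (n : ℝ) ≠ 0 := by positivity
  rw [Function.comp_apply, ← exp_nat_mul]
  congr 1
  field_simp
  push_cast
  ring

theorem weighted_exp_sum_limit (ε : ℝ) (hε : 0 < ε) :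
    Tendsto (fun n : ℕ =>
        ε ^ 2 * (1 - Real.exp (-1 / (n * ε ^ 2))) ^ 2 *
          ∑ k ∈ Finset.Icc 2 n,
            ((n + 1 - k : ℕ) : ℝ) * Real.exp (-((k : ℝ) - 1) / (n * ε ^ 2)))
      atTop (nhds (1 + ε ^ 2 * (Real.exp (-1 / ε ^ 2) - 1))) := by
  have ha : 0 < ε ^ 2 := by positivity
  have hq := tendsto_exp_neg_one_div_natCast_mul ha
  have hlim := (((hq.mul (tendsto_natCast_mul_one_sub_exp_neg_one_div_natCast_mul ha)).sub hq).add
    (tendsto_exp_neg_one_div_natCast_mul_pow_succ ha)).const_mul (ε ^ 2)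
  convert hlim using 2 with n
  · set q := exp (-1 / (n * ε ^ 2))
    have hpow :
        ∑ k ∈ Finset.Icc 2 n, ((n + 1 - k : ℕ) : ℝ) * exp (-((k : ℝ) - 1) / (n * ε ^ 2)) =
          ∑ k ∈ Finset.Icc 2 n, ((n + 1 - k : ℕ) : ℝ) * q ^ (k - 1) :=
      Finset.sum_congr rfl fun k hk => by
        rw [exp_neg_natCast_sub_one_div _ (by linarith [(Finset.mem_Icc.mp hk).1])]
    rw [hpow, mul_assoc, one_sub_sq_mul_sum_Icc_two]
    ring
  · field_simp
    ring
end

section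
/- The iterated limit lim_{ε → 0⁺} lim_{n→∞} ε² · ( 1 − e^{−1/(n ε²)} )² · Σ_{k=2}^n (n+1−k) · e^{−(k−1)/(n ε²)} equals 1; that is, for each fixed ε > 0 the inner limit over n exists, and the resulting function of ε tends to 1 as ε → 0⁺. -/
/-!
Put `x = exp (-1 / (n ε²))`. Summing the geometric series twice gives the closed form
`(1 - x)² ∑_{k=2}^n (n + 1 - k) x^(k-1) = n x (1 - x) - x + x^(n+1)`, in which `x → 1`,
`n (1 - x) → 1 / ε²` (the derivative of `exp` at `0`) and `x^n = exp (-1 / ε²)` for every `n ≥ 1`.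
Hence the inner limit is `1 - ε² + ε² exp (-1 / ε²)`, and `ε² exp (-1 / ε²) ≤ ε² → 0`.
-/

open Filter Topology Finset

section Sums

variable {R : Type*} [CommRing R]

theorem one_sub_mul_sum_Icc_two_pow_pred (x : R) (n : ℕ) :
    (1 - x) * ∑ k ∈ Icc 2 (n + 1), x ^ (k - 1) = x - x ^ (n + 1) := by
  induction n with
  | zero => simp
  | succ m ih =>
    rw [sum_Icc_succ_top (by omega), mul_add, ih, Nat.add_sub_cancel]
    ring

theorem one_sub_sq_mul_sum_Icc_two_weighted_pow_pred (x : R) (n : ℕ) :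
    (1 - x) ^ 2 * ∑ k ∈ Icc 2 n, ((n + 1 - k : ℕ) : R) * x ^ (k - 1) =
      n * x * (1 - x) - x + x ^ (n + 1) := by
  induction n with
  | zero => simp
  | succ m ih =>
    -- `m + 2 - k = (m + 1 - k) + 1`, and the weight `m + 1 - k` vanishes at the new top index
    have hsplit : ∑ k ∈ Icc 2 (m + 1), ((m + 1 + 1 - k : ℕ) : R) * x ^ (k - 1) =
        ∑ k ∈ Icc 2 m, ((m + 1 - k : ℕ) : R) * x ^ (k - 1) + ∑ k ∈ Icc 2 (m + 1), x ^ (k - 1) := by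
      have hextend : ∑ k ∈ Icc 2 m, ((m + 1 - k : ℕ) : R) * x ^ (k - 1) =
          ∑ k ∈ Icc 2 (m + 1), ((m + 1 - k : ℕ) : R) * x ^ (k - 1) := by
        refine sum_subset (Icc_subset_Icc_right m.le_succ) fun k hk hkm => ?_
        simp only [mem_Icc] at hk hkm
        simp [show m + 1 - k = 0 by omega]
      rw [hextend, ← sum_add_distrib]
      refine sum_congr rfl fun k hk => ?_
      rw [Nat.sub_add_comm (mem_Icc.mp hk).2]
      push_cast
      ring
    rw [hsplit, mul_add, ih, sq, mul_assoc (1 - x), one_sub_mul_sum_Icc_two_pow_pred]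
    push_cast
    ring

end Sums

theorem HasDerivAt.tendsto_nat_smul_sub_div {E : Type*} [NormedAddCommGroup E] [NormedSpace ℝ E]
    {f : ℝ → E} {f' : E} (hf : HasDerivAt f f' 0) (c : ℝ) :
    Tendsto (fun n : ℕ => (n : ℝ) • (f (c / n) - f 0)) atTop (𝓝 (c • f')) := by
  rcases eq_or_ne c 0 with rfl | hc
  · simp
  have hslope := (hasDerivAt_iff_tendsto_slope_zero.mp hf).const_smul c
  have hcn : Tendsto (fun n : ℕ => c / n) atTop (𝓝[≠] 0) :=
    tendsto_nhdsWithin_of_tendsto_nhds_of_eventually_within _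
      (tendsto_const_div_atTop_nhds_zero_nat c)
      (eventually_ne_atTop 0 |>.mono fun n hn => div_ne_zero hc (Nat.cast_ne_zero.mpr hn))
  refine (hslope.comp hcn).congr' (eventually_ne_atTop 0 |>.mono fun n hn => ?_)
  have hn : (n : ℝ) ≠ 0 := Nat.cast_ne_zero.mpr hn
  simp only [Function.comp_apply, zero_add, smul_smul]
  congr 1
  field_simp

theorem weighted_exp_sum_eq (ε : ℝ) {n : ℕ} (hn : n ≠ 0) :
    ε ^ 2 * (1 - Real.exp (-1 / (n * ε ^ 2))) ^ 2 *
        ∑ k ∈ Icc 2 n, ((n + 1 - k : ℕ) : ℝ) * Real.exp (-((k : ℝ) - 1) / (n * ε ^ 2)) =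
      ε ^ 2 * (Real.exp (-1 / ε ^ 2 / n) * (n * (1 - Real.exp (-1 / ε ^ 2 / n)))
        - Real.exp (-1 / ε ^ 2 / n) + Real.exp (-1 / ε ^ 2 / n) * Real.exp (-1 / ε ^ 2)) := by
  set x := Real.exp (-1 / ε ^ 2 / n)
  have hx : Real.exp (-1 / (n * ε ^ 2)) = x := by rw [mul_comm, ← div_div]
  have hpow : ∀ k ∈ Icc 2 n, Real.exp (-((k : ℝ) - 1) / (n * ε ^ 2)) = x ^ (k - 1) := by
    intro k hk
    rw [← Real.exp_nat_mul, Nat.cast_pred (by linarith [(mem_Icc.mp hk).1])]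
    ring_nf
  have hxn : x ^ n = Real.exp (-1 / ε ^ 2) := by
    rw [← Real.exp_nat_mul]
    field_simp
  rw [hx, sum_congr rfl fun k hk => by rw [hpow k hk], mul_assoc,
    one_sub_sq_mul_sum_Icc_two_weighted_pow_pred, pow_succ' x n, hxn]
  ring

theorem tendsto_weighted_exp_sum {ε : ℝ} (hε : ε ≠ 0) :
    Tendsto (fun n : ℕ => ε ^ 2 * (1 - Real.exp (-1 / (n * ε ^ 2))) ^ 2 *
        ∑ k ∈ Icc 2 n, ((n + 1 - k : ℕ) : ℝ) * Real.exp (-((k : ℝ) - 1) / (n * ε ^ 2)))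
      atTop (𝓝 (1 - ε ^ 2 + ε ^ 2 * Real.exp (-1 / ε ^ 2))) := by
  have hx : Tendsto (fun n : ℕ => Real.exp (-1 / ε ^ 2 / n)) atTop (𝓝 1) := by
    simpa only [Function.comp_def, Real.exp_zero] using
      (Real.continuous_exp.tendsto 0).comp (tendsto_const_div_atTop_nhds_zero_nat _)
  have hnx : Tendsto (fun n : ℕ => (n : ℝ) * (1 - Real.exp (-1 / ε ^ 2 / n))) atTop
      (𝓝 (1 / ε ^ 2)) := by
    have h := ((Real.hasDerivAt_exp 0).tendsto_nat_smul_sub_div (-1 / ε ^ 2)).neg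
    simp only [smul_eq_mul, Real.exp_zero, mul_one, ← mul_neg, neg_sub] at h
    convert h using 2
    ring
  have hlim := (((hx.mul hnx).sub hx).add (hx.mul_const (Real.exp (-1 / ε ^ 2)))).const_mul (ε ^ 2)
  convert hlim.congr' (eventually_ne_atTop 0 |>.mono fun n hn => (weighted_exp_sum_eq ε hn).symm)
    using 2
  field_simp

theorem tendsto_one_sub_sq_add_sq_mul_exp_neg_one_div_sq :
    Tendsto (fun ε : ℝ => 1 - ε ^ 2 + ε ^ 2 * Real.exp (-1 / ε ^ 2)) (𝓝 0) (𝓝 1) := by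
  have hsq : Tendsto (fun ε : ℝ => ε ^ 2) (𝓝 0) (𝓝 0) := (continuous_pow 2).tendsto' 0 0 (by simp)
  have hexp : Tendsto (fun ε : ℝ => ε ^ 2 * Real.exp (-1 / ε ^ 2)) (𝓝 0) (𝓝 0) :=
    squeeze_zero (fun ε => by positivity) (fun ε => mul_le_of_le_one_right (sq_nonneg ε)
      (Real.exp_le_one_iff.mpr (div_nonpos_of_nonpos_of_nonneg (by norm_num) (sq_nonneg ε)))) hsq
  simpa using (tendsto_const_nhds (x := (1 : ℝ)).sub hsq).add hexp

theorem weighted_exp_sum_iterated_limit :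
    ∃ L : ℝ → ℝ,
      (∀ ε : ℝ, 0 < ε →
          Tendsto (fun n : ℕ =>
              ε ^ 2 * (1 - Real.exp (-1 / (n * ε ^ 2))) ^ 2 *
                ∑ k ∈ Finset.Icc 2 n,
                  ((n + 1 - k : ℕ) : ℝ) * Real.exp (-((k : ℝ) - 1) / (n * ε ^ 2)))
            atTop (nhds (L ε))) ∧
        Tendsto L (nhdsWithin 0 (Set.Ioi 0)) (nhds 1) := by
  exact ⟨fun ε => 1 - ε ^ 2 + ε ^ 2 * Real.exp (-1 / ε ^ 2),
    fun ε hε => tendsto_weighted_exp_sum hε.ne',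
    tendsto_one_sub_sq_add_sq_mul_exp_neg_one_div_sq.mono_left nhdsWithin_le_nhds⟩
end

section
/- Let g : ℝ → ℝ be continuous with g(0) > 0, suppose S = { t > 0 : g(t) < 0 } is nonempty, and let τ = inf S. Then: (i) for all sufficiently large positive integers n, the set { k ∈ ℕ : g(k/n) < 0 } is nonempty; (ii) letting k_n denote its least element for such n, the grid first-crossing times converge, lim_{n→∞} k_n / n = τ; and (iii) the values at the first crossing converge to zero, lim_{n→∞} g( k_n / n ) = 0. -/
/-! On the grid of mesh `1/n` the point `⌈s n⌉ / n` tends to `s`, so every point `s ≥ 0` of the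
open set `{g < 0}` is eventually approached from the grid; applied to points of `S` just above
`τ = inf S` this bounds `k_n / n` from above, while `g(0) > 0` keeps every nonnegative crossing,
in particular `k_n / n`, at least `τ`. Continuity then forces `g(τ) = 0`: `g ≤ 0` at `τ` since
`τ ∈ closure S`, and `g ≥ 0` on `[0, τ)`, whose closure contains `τ`. -/

open Filter Set Topology

lemma eventually_exists_natCast_div_mem {U : Set ℝ} {s : ℝ} (hs : 0 ≤ s) (hU : U ∈ 𝓝 s) :
    ∀ᶠ n : ℕ in atTop, ∃ k : ℕ, (k : ℝ) / n ∈ U :=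
  Eventually.mono ((tendsto_nat_ceil_mul_div_atTop hs).comp tendsto_natCast_atTop_atTop hU)
    fun _ hn => ⟨_, hn⟩

section FirstCrossing

variable {g : ℝ → ℝ}

lemma sInf_le_of_apply_neg (h0 : 0 < g 0) {t : ℝ} (ht : 0 ≤ t) (hgt : g t < 0) :
    sInf {t : ℝ | 0 < t ∧ g t < 0} ≤ t :=
  csInf_le ⟨0, fun _ hu => hu.1.le⟩ ⟨ht.lt_of_ne (by rintro rfl; linarith), hgt⟩

lemma apply_sInf_eq_zero (hg : Continuous g) (h0 : 0 < g 0)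
    (hS : {t : ℝ | 0 < t ∧ g t < 0}.Nonempty) : g (sInf {t : ℝ | 0 < t ∧ g t < 0}) = 0 := by
  set τ := sInf {t : ℝ | 0 < t ∧ g t < 0}
  have hτ : 0 ≤ τ := le_csInf hS fun _ ht => ht.1.le
  have hle : g τ ≤ 0 :=
    closure_minimal (fun _ ht => ht.2.le) (isClosed_le hg continuous_const)
      (csInf_mem_closure hS ⟨0, fun _ ht => ht.1.le⟩)
  have hge : 0 ≤ g τ := by
    rcases hτ.eq_or_lt with hτ0 | hτpos
    · rw [← hτ0]; exact h0.le
    have hIco : Ico 0 τ ⊆ {t | 0 ≤ g t} := fun t ht =>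
      not_lt.1 fun hgt => (sInf_le_of_apply_neg h0 ht.1 hgt).not_gt ht.2
    have hτmem : τ ∈ closure (Ico 0 τ) := by
      rw [closure_Ico hτpos.ne]; exact right_mem_Icc.2 hτ
    exact closure_minimal hIco (isClosed_le continuous_const hg) hτmem
  exact le_antisymm hle hge

lemma eventually_exists_grid_neg_lt (hg : Continuous g) {s b : ℝ} (hs : 0 ≤ s) (hgs : g s < 0)
    (hsb : s < b) : ∀ᶠ n : ℕ in atTop, ∃ k : ℕ, g ((k : ℝ) / n) < 0 ∧ (k : ℝ) / n < b :=
  eventually_exists_natCast_div_mem hs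
    (inter_mem ((isOpen_lt hg continuous_const).mem_nhds hgs) (Iio_mem_nhds hsb))

lemma natCast_sInf_div_le {n k : ℕ} (hk : g ((k : ℝ) / n) < 0) :
    ((sInf {k : ℕ | g ((k : ℝ) / n) < 0} : ℕ) : ℝ) / n ≤ (k : ℝ) / n := by
  gcongr
  exact Nat.sInf_le hk

end FirstCrossing

theorem grid_first_crossing_converges (g : ℝ → ℝ) (hg : Continuous g) (h0 : 0 < g 0)
    (hS : {t : ℝ | 0 < t ∧ g t < 0}.Nonempty) :
    (∀ᶠ n : ℕ in atTop, {k : ℕ | g ((k : ℝ) / n) < 0}.Nonempty) ∧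
      Tendsto (fun n : ℕ => ((sInf {k : ℕ | g ((k : ℝ) / n) < 0} : ℕ) : ℝ) / n)
        atTop (nhds (sInf {t : ℝ | 0 < t ∧ g t < 0})) ∧
      Tendsto (fun n : ℕ => g (((sInf {k : ℕ | g ((k : ℝ) / n) < 0} : ℕ) : ℝ) / n))
        atTop (nhds 0) := by
  have hne : ∀ᶠ n : ℕ in atTop, {k : ℕ | g ((k : ℝ) / n) < 0}.Nonempty := by
    obtain ⟨s, hspos, hgs⟩ := hS
    filter_upwards [eventually_exists_grid_neg_lt hg hspos.le hgs (lt_add_one s)]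
      with n ⟨k, hk, _⟩
    exact ⟨k, hk⟩
  have hlim : Tendsto (fun n : ℕ => ((sInf {k : ℕ | g ((k : ℝ) / n) < 0} : ℕ) : ℝ) / n)
      atTop (𝓝 (sInf {t : ℝ | 0 < t ∧ g t < 0})) := by
    refine tendsto_order.2 ⟨fun a ha => hne.mono fun n hn => ?_, fun b hb => ?_⟩
    · exact ha.trans_le (sInf_le_of_apply_neg h0 (by positivity) (Nat.sInf_mem hn))
    · obtain ⟨u, ⟨hupos, hgu⟩, hub⟩ := exists_lt_of_csInf_lt hS hb
      filter_upwards [eventually_exists_grid_neg_lt hg hupos.le hgu hub] with n ⟨k, hk, hkb⟩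
      exact (natCast_sInf_div_le hk).trans_lt hkb
  refine ⟨hne, hlim, ?_⟩
  have hcomp := (hg.tendsto _).comp hlim
  rwa [apply_sInf_eq_zero hg h0 hS] at hcomp
end
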